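/- Let q ∈ (1/2, 1] and let σ be a density operator on ℂ²⊗ℂ²⊗ℂ² with ⟨GHZ|σ|GHZ⟩ ≥ q, where |GHZ⟩ = (|000⟩ + |111⟩)/√2. Then every eigenvalue λ of the reduced density operator σ_A = Tr_{BC} σ on the first qubit satisfies (1 − 2√(q(1−q)))/2 ≤ λ ≤ (1 + 2√(q(1−q)))/2. -/

import Mathlib

/-!
Write `σ = Bᴴ B`, so that `x ↦ ‖B x‖ = √⟨x|σ|x⟩` is a seminorm. Let `u` be a unit eigenvector
of `σ_A` with eigenvalue `λ` and `w` a unit vector orthogonal to it. Expanding the first qubit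
of GHZ in the basis `{u, w}` gives `GHZ = u ⊗ φ + w ⊗ ψ` with `‖φ‖² = ‖ψ‖² = 1/2`.
Cauchy–Schwarz over the last two qubits gives `⟨u ⊗ φ|σ|u ⊗ φ⟩ ≤ ‖φ‖² ⟨u|σ_A|u⟩ = λ/2`, and
likewise `⟨w ⊗ ψ|σ|w ⊗ ψ⟩ ≤ (1 - λ)/2`. By the triangle inequality for the seminorm,
`q ≤ (√(λ/2) + √((1 - λ)/2))² = 1/2 + √(λ(1 - λ))`, which solves to `|λ - 1/2| ≤ √(q(1 - q))`.
-/

open scoped BigOperators ComplexOrder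
open Matrix

noncomputable section

/-- The GHZ state `(|000⟩ + |111⟩)/√2` on `ℂ²⊗ℂ²⊗ℂ²`. -/
def ghz3 : Fin 2 × Fin 2 × Fin 2 → ℂ :=
  fun p =>
    if p = (0, 0, 0) then ((Real.sqrt 2 : ℂ))⁻¹
    else if p = (1, 1, 1) then ((Real.sqrt 2 : ℂ))⁻¹ else 0

/-- The reduced density operator on the first qubit (partial trace over the second and
third tensor factors). -/
def redA (σ : Matrix (Fin 2 × Fin 2 × Fin 2) (Fin 2 × Fin 2 × Fin 2) ℂ) :
    Matrix (Fin 2) (Fin 2) ℂ :=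
  fun x y => ∑ u : Fin 2 × Fin 2, σ (x, u.1, u.2) (y, u.1, u.2)

namespace Matrix

variable {𝕜 ι κ n : Type*} [RCLike 𝕜] [Fintype n] [Fintype κ]

open scoped MatrixOrder in
lemma PosSemidef.exists_linearMap_dotProduct_eq_norm_sq {σ : Matrix n n 𝕜}
    (hσ : σ.PosSemidef) :
    ∃ f : (n → 𝕜) →ₗ[𝕜] EuclideanSpace 𝕜 n, ∀ x, star x ⬝ᵥ σ *ᵥ x = (‖f x‖ ^ 2 : ℝ) := by
  classical
  obtain ⟨B, rfl⟩ := CStarAlgebra.nonneg_iff_eq_star_mul_self.mp hσ.nonneg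
  refine ⟨(WithLp.linearEquiv 2 𝕜 (n → 𝕜)).symm.toLinearMap ∘ₗ B.mulVecLin, fun x => ?_⟩
  rw [RCLike.ofReal_pow, ← inner_self_eq_norm_sq_to_K]
  simp only [LinearMap.comp_apply, mulVecLin_apply, LinearEquiv.coe_coe,
    WithLp.linearEquiv_symm_apply]
  rw [← mulVec_mulVec, dotProduct_mulVec, star_eq_conjTranspose, vecMul_conjTranspose,
    star_star, dotProduct_comm]
  rfl

lemma PosSemidef.re_dotProduct_add_le {σ : Matrix n n 𝕜} (hσ : σ.PosSemidef) (x y : n → 𝕜) :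
    RCLike.re (star (x + y) ⬝ᵥ σ *ᵥ (x + y)) ≤
      (√(RCLike.re (star x ⬝ᵥ σ *ᵥ x)) + √(RCLike.re (star y ⬝ᵥ σ *ᵥ y))) ^ 2 := by
  obtain ⟨f, hf⟩ := hσ.exists_linearMap_dotProduct_eq_norm_sq
  simp only [hf, RCLike.ofReal_re, Real.sqrt_sq (norm_nonneg _), map_add]
  exact pow_le_pow_left₀ (norm_nonneg _) (norm_add_le _ _) 2

lemma exists_dotProduct_star_self_eq_one_and_mulVec_eq_smul {M : Matrix n n 𝕜} {μ : 𝕜}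
    {v : n → 𝕜} (hv : v ≠ 0) (h : M *ᵥ v = μ • v) :
    ∃ u, star u ⬝ᵥ u = 1 ∧ M *ᵥ u = μ • u := by
  obtain ⟨r, hr, hvr⟩ := RCLike.pos_iff_exists_ofReal.mp (dotProduct_star_self_pos_iff.mpr hv)
  refine ⟨((√r)⁻¹ : ℝ) • v, ?_, by rw [mulVec_smul, h, smul_comm]⟩
  rw [star_smul, smul_dotProduct, dotProduct_smul, ← hvr, star_trivial, smul_smul,
    ← mul_inv, Real.mul_self_sqrt hr.le, RCLike.real_smul_eq_coe_mul, ← RCLike.ofReal_mul,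
    inv_mul_cancel₀ hr.ne', RCLike.ofReal_one]

def tensorVec (v : ι → 𝕜) (φ : κ → 𝕜) : ι × κ → 𝕜 := fun p => v p.1 * φ p.2

lemma tensorVec_eq_sum_smul [DecidableEq κ] (v : ι → 𝕜) (φ : κ → 𝕜) :
    tensorVec v φ = ∑ u, φ u • tensorVec v (Pi.single u 1) := by
  ext p
  simp [tensorVec, Pi.single_apply, mul_comm]

lemma norm_sq_map_tensorVec_le {E : Type*} [SeminormedAddCommGroup E] [NormedSpace 𝕜 E]
    [DecidableEq κ] (f : (ι × κ → 𝕜) →ₗ[𝕜] E) (v : ι → 𝕜) (φ : κ → 𝕜) :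
    ‖f (tensorVec v φ)‖ ^ 2 ≤
      (∑ u, ‖φ u‖ ^ 2) * ∑ u, ‖f (tensorVec v (Pi.single u 1))‖ ^ 2 := by
  have h : ‖f (tensorVec v φ)‖ ≤ ∑ u, ‖φ u‖ * ‖f (tensorVec v (Pi.single u 1))‖ := by
    rw [tensorVec_eq_sum_smul, map_sum]
    refine (norm_sum_le _ _).trans_eq (Finset.sum_congr rfl fun u _ => ?_)
    rw [map_smul, norm_smul]
  exact (pow_le_pow_left₀ (norm_nonneg _) h 2).trans (Finset.sum_mul_sq_le_sq_mul_sq _ _ _)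

variable [Fintype ι]

def partialTraceRight (σ : Matrix (ι × κ) (ι × κ) 𝕜) : Matrix ι ι 𝕜 :=
  fun x y => ∑ u, σ (x, u) (y, u)

lemma trace_partialTraceRight (σ : Matrix (ι × κ) (ι × κ) 𝕜) :
    (partialTraceRight σ).trace = σ.trace := by
  simp [trace, partialTraceRight, Fintype.sum_prod_type]

lemma dotProduct_partialTraceRight_mulVec [DecidableEq κ] (σ : Matrix (ι × κ) (ι × κ) 𝕜)
    (v : ι → 𝕜) :
    star v ⬝ᵥ partialTraceRight σ *ᵥ v =
      ∑ u, star (tensorVec v (Pi.single u 1)) ⬝ᵥ σ *ᵥ tensorVec v (Pi.single u 1) := by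
  simp only [dotProduct, mulVec, partialTraceRight, tensorVec, Fintype.sum_prod_type,
    Pi.star_apply, star_mul', Pi.single_apply]
  simp [Finset.mul_sum, Finset.sum_mul, mul_left_comm, Finset.sum_comm (γ := κ)]

lemma PosSemidef.re_dotProduct_tensorVec_le {σ : Matrix (ι × κ) (ι × κ) 𝕜}
    (hσ : σ.PosSemidef) (v : ι → 𝕜) (φ : κ → 𝕜) :
    RCLike.re (star (tensorVec v φ) ⬝ᵥ σ *ᵥ tensorVec v φ) ≤
      (∑ u, ‖φ u‖ ^ 2) * RCLike.re (star v ⬝ᵥ partialTraceRight σ *ᵥ v) := by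
  classical
  obtain ⟨f, hf⟩ := hσ.exists_linearMap_dotProduct_eq_norm_sq
  simp only [dotProduct_partialTraceRight_mulVec, hf, map_sum, RCLike.ofReal_re]
  exact norm_sq_map_tensorVec_le f v φ

def partialInnerLeft (a : ι → 𝕜) (g : ι × κ → 𝕜) : κ → 𝕜 :=
  fun u => ∑ x, star (a x) * g (x, u)

end Matrix

lemma redA_eq_partialTraceRight (σ : Matrix (Fin 2 × Fin 2 × Fin 2) (Fin 2 × Fin 2 × Fin 2) ℂ) :
    redA σ = partialTraceRight σ :=
  rfl

def qubitPerp (v : Fin 2 → ℂ) : Fin 2 → ℂ := ![-star (v 1), star (v 0)]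

lemma star_qubitPerp_dotProduct_self (v : Fin 2 → ℂ) :
    star (qubitPerp v) ⬝ᵥ qubitPerp v = star v ⬝ᵥ v := by
  simp only [qubitPerp, dotProduct, Fin.sum_univ_two, Pi.star_apply, cons_val_zero, cons_val_one,
    cons_val_fin_one, star_neg, star_star]
  ring

lemma dotProduct_mulVec_add_qubitPerp (M : Matrix (Fin 2) (Fin 2) ℂ) {v : Fin 2 → ℂ}
    (hv : star v ⬝ᵥ v = 1) :
    star v ⬝ᵥ M *ᵥ v + star (qubitPerp v) ⬝ᵥ M *ᵥ qubitPerp v = M.trace := by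
  simp only [qubitPerp, dotProduct, mulVec, trace, diag_apply, Fin.sum_univ_two, Pi.star_apply,
    cons_val_zero, cons_val_one, cons_val_fin_one, star_neg, star_star] at hv ⊢
  linear_combination (M 0 0 + M 1 1) * hv

lemma tensorVec_partialInnerLeft_add_qubitPerp {κ : Type*} {v : Fin 2 → ℂ}
    (hv : star v ⬝ᵥ v = 1) (g : Fin 2 × κ → ℂ) :
    tensorVec v (partialInnerLeft v g) +
      tensorVec (qubitPerp v) (partialInnerLeft (qubitPerp v) g) = g := by
  simp only [dotProduct, Fin.sum_univ_two, Pi.star_apply] at hv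
  ext ⟨x, u⟩
  fin_cases x <;>
    simp only [Fin.zero_eta, Fin.mk_one, Pi.add_apply, tensorVec, partialInnerLeft, qubitPerp,
      Fin.sum_univ_two, cons_val_zero, cons_val_one, cons_val_fin_one, star_neg, star_star]
  · linear_combination g (0, u) * hv
  · linear_combination g (1, u) * hv

lemma sum_norm_sq_partialInnerLeft_ghz3 {a : Fin 2 → ℂ} (ha : star a ⬝ᵥ a = 1) :
    ∑ u, ‖partialInnerLeft a ghz3 u‖ ^ 2 = 1 / 2 := by
  have h : ‖a 0‖ ^ 2 + ‖a 1‖ ^ 2 = 1 := by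
    simp only [dotProduct, Fin.sum_univ_two, Pi.star_apply, RCLike.star_def,
      Complex.conj_mul'] at ha
    exact_mod_cast ha
  simp [partialInnerLeft, ghz3, Fintype.sum_prod_type, Fin.sum_univ_two, mul_pow, ← add_mul, h]

lemma abs_sub_half_le_sqrt_of_le_sq_sqrt_add_sqrt {q lam a b : ℝ} (hq : 1 / 2 < q)
    (ha : 0 ≤ a) (hb : 0 ≤ b) (ha' : a ≤ 1 / 2 * lam) (hb' : b ≤ 1 / 2 * (1 - lam))
    (h : q ≤ (√a + √b) ^ 2) :
    |lam - 1 / 2| ≤ √(q * (1 - q)) := by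
  have hsa := Real.sq_sqrt ha
  have hsb := Real.sq_sqrt hb
  have hcross : q - 1 / 2 ≤ 2 * (√a * √b) := by nlinarith
  have hprod : (q - 1 / 2) ^ 2 ≤ lam * (1 - lam) :=
    calc (q - 1 / 2) ^ 2 ≤ (2 * (√a * √b)) ^ 2 := pow_le_pow_left₀ (by linarith) hcross 2
      _ = 4 * (a * b) := by rw [mul_pow, mul_pow, hsa, hsb]; ring
      _ ≤ 4 * ((1 / 2 * lam) * (1 / 2 * (1 - lam))) := by gcongr; linarith
      _ = lam * (1 - lam) := by ring
  exact Real.abs_le_sqrt (by nlinarith)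

/-- if a three-qubit density operator `σ` has fidelity at least
`q > 1/2` with the GHZ state, then every eigenvalue `λ` of the reduced state
`σ_A = Tr_{BC} σ` satisfies `(1-2√(q(1-q)))/2 ≤ λ ≤ (1+2√(q(1-q)))/2`. -/
theorem stmt_15 (q : ℝ) (hq : q ∈ Set.Ioc (1 / 2) 1)
    (σ : Matrix (Fin 2 × Fin 2 × Fin 2) (Fin 2 × Fin 2 × Fin 2) ℂ)
    (hσpsd : σ.PosSemidef) (hσtr : σ.trace = 1)
    (hfid : (q : ℂ) ≤ star ghz3 ⬝ᵥ σ.mulVec ghz3) :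
    ∀ (lam : ℝ) (v : Fin 2 → ℂ), v ≠ 0 → (redA σ).mulVec v = (lam : ℂ) • v →
      (1 - 2 * Real.sqrt (q * (1 - q))) / 2 ≤ lam ∧
      lam ≤ (1 + 2 * Real.sqrt (q * (1 - q))) / 2 := by
  intro lam v hv hev
  obtain ⟨u, hu, hρu⟩ := exists_dotProduct_star_self_eq_one_and_mulVec_eq_smul hv hev
  rw [redA_eq_partialTraceRight] at hρu
  have hw : star (qubitPerp u) ⬝ᵥ qubitPerp u = 1 := (star_qubitPerp_dotProduct_self u).trans hu
  have hρu_eq : RCLike.re (star u ⬝ᵥ partialTraceRight σ *ᵥ u) = lam := by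
    simp [hρu, hu]
  have hρw_eq :
      RCLike.re (star (qubitPerp u) ⬝ᵥ partialTraceRight σ *ᵥ qubitPerp u) = 1 - lam := by
    have h := congrArg RCLike.re (dotProduct_mulVec_add_qubitPerp (partialTraceRight σ) hu)
    rw [map_add, hρu_eq, trace_partialTraceRight, hσtr, RCLike.one_re] at h
    linarith
  have hbound_u := hσpsd.re_dotProduct_tensorVec_le u (partialInnerLeft u ghz3)
  have hbound_w :=
    hσpsd.re_dotProduct_tensorVec_le (qubitPerp u) (partialInnerLeft (qubitPerp u) ghz3)
  rw [sum_norm_sq_partialInnerLeft_ghz3 hu, hρu_eq] at hbound_u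
  rw [sum_norm_sq_partialInnerLeft_ghz3 hw, hρw_eq] at hbound_w
  have hsplit := hσpsd.re_dotProduct_add_le (tensorVec u (partialInnerLeft u ghz3))
    (tensorVec (qubitPerp u) (partialInnerLeft (qubitPerp u) ghz3))
  rw [tensorVec_partialInnerLeft_add_qubitPerp hu] at hsplit
  have hfid_re : q ≤ RCLike.re (star ghz3 ⬝ᵥ σ *ᵥ ghz3) := (Complex.le_def.mp hfid).1
  have habs := abs_sub_half_le_sqrt_of_le_sq_sqrt_add_sqrt hq.1 (hσpsd.re_dotProduct_nonneg _)
    (hσpsd.re_dotProduct_nonneg _) hbound_u hbound_w (hfid_re.trans hsplit)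
  obtain ⟨hlow, hhigh⟩ := abs_le.mp habs
  constructor <;> linarith

end
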